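/- Constant-coefficient flux formula: let a < c, h = c − a, m = (a+c)/2, and let ε > 0, μ ≥ 0, b ≠ 0 and s be constants with d = ε + μ b > 0; set P = b h / d. If φ ∈ C²([a,c]) satisfies −d φ'' + b φ' = s on (a,c), then the flux f = b φ − d φ' at the midpoint satisfies f(m) = (d/h) [ B(−P) φ(a) − B(P) φ(c) ] + ( 1/2 − W(P) ) s h, where B(z) = z/(e^z − 1) is the Bernoulli function and W(z) = (e^z − 1 − z)/(z(e^z − 1)) is the weight function. -/

import Mathlib

/-- Bernoulli function `B(z) = z / (e^z − 1)`. -/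
noncomputable def Bern (z : ℝ) : ℝ := z / (Real.exp z - 1)

/-- Weight function `W(z) = (e^z − 1 − z) / (z (e^z − 1))`. -/
noncomputable def Wt (z : ℝ) : ℝ := (Real.exp z - 1 - z) / (z * (Real.exp z - 1))

/-!
With `β = b / d` the equation reads `φ'' = β (φ' - s / b)`, so `φ' - s / b` is a multiple of
`e^{β (x - a)}` and `φ` is affine plus a multiple of that exponential on `[a, c]`. In the flux
`b φ - d φ'` the exponential terms cancel (`b / β = d`), so `f(m)` is affine in `φ(a)` and
`φ'(a)`; eliminating `φ'(a)` through the value `φ(c)` gives the formula, once it is written with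
`B(-P) = B(P) + P` and `W(P) = (1 - B(P)) / P`.
-/

open Real Set

theorem Bern_neg (z : ℝ) : Bern (-z) = Bern z + z := by
  rcases eq_or_ne z 0 with rfl | hz
  · simp [Bern]
  have hE : exp z - 1 ≠ 0 := sub_ne_zero.2 (by simpa using hz)
  have hE' : 1 - exp z ≠ 0 := sub_ne_zero.2 (Ne.symm (by simpa using hz))
  rw [Bern, Bern, exp_neg]
  field_simp
  ring

theorem Wt_eq_one_sub_Bern_div (z : ℝ) : Wt z = (1 - Bern z) / z := by
  rcases eq_or_ne z 0 with rfl | hz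
  · simp [Wt, Bern]
  have hE : exp z - 1 ≠ 0 := sub_ne_zero.2 (by simpa using hz)
  rw [Wt, Bern]
  field_simp

theorem constant_of_hasDerivAt_zero_Ioo {f : ℝ → ℝ} {a b : ℝ} (hcont : ContinuousOn f (Icc a b))
    (hderiv : ∀ x ∈ Ioo a b, HasDerivAt f 0 x) : ∀ x ∈ Icc a b, f x = f a := by
  rintro x ⟨hax, hxb⟩
  rcases hax.eq_or_lt with rfl | hax
  · rfl
  obtain ⟨ξ, -, hξ⟩ := exists_hasDerivAt_eq_slope f (fun _ ↦ 0) hax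
    (hcont.mono (Icc_subset_Icc_right hxb)) fun y hy ↦ hderiv y ⟨hy.1, hy.2.trans_le hxb⟩
  rw [eq_comm, div_eq_zero_iff, sub_eq_zero, sub_eq_zero] at hξ
  exact hξ.resolve_right hax.ne'

theorem eq_add_mul_exp_of_deriv_eq {y : ℝ → ℝ} {a c β r : ℝ} (hy : Differentiable ℝ y)
    (hode : ∀ x ∈ Ioo a c, deriv y x = β * (y x - r)) :
    ∀ x ∈ Icc a c, y x = r + (y a - r) * exp (β * (x - a)) := by
  set k : ℝ → ℝ := fun x ↦ exp (-(β * (x - a))) * (y x - r)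
  have hk : ∀ x, HasDerivAt k (exp (-(β * (x - a))) * (deriv y x - β * (y x - r))) x := by
    intro x
    have hexp : HasDerivAt (fun x ↦ exp (-(β * (x - a)))) (exp (-(β * (x - a))) * -β) x := by
      simpa using (((hasDerivAt_id x).sub_const a).const_mul β).neg.exp
    exact (hexp.mul ((hy x).hasDerivAt.sub_const r)).congr_deriv (by ring)
  intro x hx
  have hkx : k x = k a := constant_of_hasDerivAt_zero_Ioo
    (fun x _ ↦ (hk x).continuousAt.continuousWithinAt)
    (fun x hx ↦ by simpa [hode x hx] using hk x) x hx
  simp only [k, sub_self, mul_zero, neg_zero, exp_zero, one_mul] at hkx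
  rw [← hkx, mul_right_comm, ← exp_add]
  simp

theorem eq_add_mul_add_exp_of_deriv_eq {φ : ℝ → ℝ} {a c β r K : ℝ} (hφ : Differentiable ℝ φ)
    (hβ : β ≠ 0) (hderiv : ∀ x ∈ Ioo a c, deriv φ x = r + K * exp (β * (x - a))) :
    ∀ x ∈ Icc a c, φ x = φ a + r * (x - a) + K / β * (exp (β * (x - a)) - 1) := by
  set g : ℝ → ℝ := fun x ↦ φ x - r * (x - a) - K / β * exp (β * (x - a))
  have hg : ∀ x, HasDerivAt g (deriv φ x - (r + K * exp (β * (x - a)))) x := by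
    intro x
    have hexp : HasDerivAt (fun x ↦ exp (β * (x - a))) (exp (β * (x - a)) * β) x := by
      simpa using (((hasDerivAt_id x).sub_const a).const_mul β).exp
    exact (((hφ x).hasDerivAt.sub (((hasDerivAt_id x).sub_const a).const_mul r)).sub
      (hexp.const_mul (K / β))).congr_deriv (by field_simp; ring)
  intro x hx
  have hgx : g x = g a := constant_of_hasDerivAt_zero_Ioo
    (fun x _ ↦ (hg x).continuousAt.continuousWithinAt)
    (fun x hx ↦ by simpa [hderiv x hx] using hg x) x hx
  simp only [g, sub_self, mul_zero, exp_zero, mul_one] at hgx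
  linear_combination hgx

theorem flux_constant_coefficients_general (a c ε μ b s : ℝ) (hac : a < c)
    (hb : b ≠ 0) (hd : 0 < ε + μ * b)
    (φ : ℝ → ℝ) (hφ : ContDiff ℝ 2 φ)
    (hode : ∀ x ∈ Set.Ioo a c,
      -(ε + μ * b) * iteratedDeriv 2 φ x + b * deriv φ x = s) :
    let d := ε + μ * b
    let h := c - a
    let m := (a + c) / 2
    let P := b * h / d
    b * φ m - d * deriv φ m =
      d / h * (Bern (-P) * φ a - Bern P * φ c) + (1 / 2 - Wt P) * s * h := by
  intro d h m P
  have hd0 : d ≠ 0 := hd.ne'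
  have hh0 : h ≠ 0 := (sub_pos.2 hac).ne'
  have hP0 : P ≠ 0 := div_ne_zero (mul_ne_zero hb hh0) hd0
  have hE : exp P - 1 ≠ 0 := sub_ne_zero.2 (by simpa using hP0)
  have hφ'_eq := eq_add_mul_exp_of_deriv_eq hφ.differentiable_deriv_two (β := b / d) (r := s / b)
    fun x hx ↦ by
      have hx := hode x hx
      rw [iteratedDeriv_succ, iteratedDeriv_one] at hx
      field_simp
      linarith
  have hφ_eq := eq_add_mul_add_exp_of_deriv_eq (hφ.differentiable (by norm_num))
    (div_ne_zero hb hd0) fun x hx ↦ hφ'_eq x (Ioo_subset_Icc_self hx)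
  have hm : m ∈ Icc a c := ⟨by simp only [m]; linarith, by simp only [m]; linarith⟩
  have hc : c ∈ Icc a c := right_mem_Icc.2 hac.le
  have hPc : b / d * (c - a) = P := by simp only [P, h]; ring
  rw [hφ_eq m hm, hφ'_eq m hm, hφ_eq c hc, hPc, Bern_neg, Wt_eq_one_sub_Bern_div, Bern]
  have hma : m - a = h / 2 := by simp only [m, h]; ring
  have hca : c - a = h := rfl
  have hPdef : P = b * h / d := rfl
  rw [hma, hca]
  clear_value d h m P
  subst hPdef
  field_simp
  ring

/-- constant-coefficient flux formula: if `−d φ'' + b φ' = s` on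
`(a,c)` with constants `d = ε + μ b > 0`, `b ≠ 0`, `s`, then the flux
`f = b φ − d φ'` at the midpoint `m = (a+c)/2` satisfies
`f(m) = (d/h)[B(−P) φ(a) − B(P) φ(c)] + (1/2 − W(P)) s h`, `P = b h / d`. -/
theorem flux_constant_coefficients (a c ε μ b s : ℝ) (hac : a < c)
    (hε : 0 < ε) (hμ : 0 ≤ μ) (hb : b ≠ 0) (hd : 0 < ε + μ * b)
    (φ : ℝ → ℝ) (hφ : ContDiff ℝ 2 φ)
    (hode : ∀ x ∈ Set.Ioo a c,
      -(ε + μ * b) * iteratedDeriv 2 φ x + b * deriv φ x = s) :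
    let d := ε + μ * b
    let h := c - a
    let m := (a + c) / 2
    let P := b * h / d
    b * φ m - d * deriv φ m =
      d / h * (Bern (-P) * φ a - Bern P * φ c) + (1 / 2 - Wt P) * s * h :=
  flux_constant_coefficients_general a c ε μ b s hac hb hd φ hφ hode
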